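/- arXiv:2407.05356 — 3 statements merged into one kernel-verified Lean document; each statement's English description precedes it below -/
import Mathlib

section
/- Let $U$ be a compact metric space. Define the affine map $\mathscr{P} : \mathcal{P}_2(\mathbb{R}^n \times \mathcal{P}(U)) \to \mathcal{P}_2(\mathbb{R}^n \times U)$ by $\mathscr{P}(\xi)(A \times B) = \int_{\mathbb{R}^n \times \mathcal{P}(U)} \mathbf{1}_A(x)\, q(B)\, \xi(\mathrm{d}x, \mathrm{d}q)$. Then $\mathscr{P}$ is 1-Lipschitz when the domain carries the Kantorovich–Rubinstein metric $d_{\mathrm{KR}}(\xi_1,\xi_2) = \sup_{f \in \mathrm{Lip}_1} \int f\, \mathrm{d}(\xi_1 - \xi_2)$ and the codomain carries the Fortet–Mourier metric. Consequently, if $h : \mathcal{P}_2(\mathbb{R}^n \times U) \to \mathbb{R}$ is Lipschitz continuous, then its extension $\tilde h := h \circ \mathscr{P}$ is Lipschitz continuous on $\mathcal{P}_2(\mathbb{R}^n \times \mathcal{P}(U))$. -/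
/-!
Averaging a Fortet–Mourier test function `f` on `ℝⁿ × U` over the second variable gives a
Kantorovich–Rubinstein test function `(x, q) ↦ ∫ f(x, ·) dq` on `ℝⁿ × 𝒫(U)`, whose integral
against `ξᵢ` is the integral of `f` against `ρᵢ`; the Lipschitz extension is then a composition of
Lipschitz bounds.

The work lies in the supremum defining `d_KR`: its test functions must be integrable, hence
bounded by `‖x‖ + const` (Fortet–Mourier distances are at most `2`) and measurable for the Giry
σ-algebra. Measurability comes from Arzelà–Ascoli: given a finite `ε`-net `(tᵢ)` of the Lipschitz
unit ball, the grid cell of `(∫ tᵢ dq / ε)ᵢ` determines `q` up to Fortet–Mourier distance `3ε`,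
so a test function is a uniform limit of functions factoring through countably many measurable
cells.
-/

open MeasureTheory

noncomputable instance {U : Type*} [MeasurableSpace U] :
    MeasurableSpace (ProbabilityMeasure U) :=
  Subtype.instMeasurableSpace

/-- The Fortet–Mourier distance between probability measures on `U`. -/
noncomputable def fmDistP {U : Type*} [MetricSpace U] [MeasurableSpace U]
    (q₁ q₂ : ProbabilityMeasure U) : ℝ :=
  sSup {r : ℝ | ∃ g : U → ℝ, LipschitzWith 1 g ∧ (∀ u, |g u| ≤ 1) ∧
    r = (∫ u, g u ∂(q₁ : Measure U)) - ∫ u, g u ∂(q₂ : Measure U)}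

/-- The Fortet–Mourier distance between measures on `ℝⁿ × U`
(test functions are `1`-Lipschitz for the sum metric, bounded by `1`). -/
noncomputable def fmDistK {n : ℕ} {U : Type*} [MetricSpace U] [MeasurableSpace U]
    (ρ₁ ρ₂ : Measure (EuclideanSpace ℝ (Fin n) × U)) : ℝ :=
  sSup {r : ℝ | ∃ f : EuclideanSpace ℝ (Fin n) × U → ℝ,
    (∀ x₁ x₂ u₁ u₂, |f (x₁, u₁) - f (x₂, u₂)| ≤ dist x₁ x₂ + dist u₁ u₂) ∧
    (∀ p, |f p| ≤ 1) ∧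
    r = (∫ p, f p ∂ρ₁) - ∫ p, f p ∂ρ₂}

/-- The Kantorovich–Rubinstein distance between measures on `ℝⁿ × 𝒫(U)`:
the supremum over test functions that are `1`-Lipschitz for the metric
`|x₁ - x₂| + ‖q₁ - q₂‖_{U,FM}`. -/
noncomputable def dKRV {n : ℕ} {U : Type*} [MetricSpace U] [MeasurableSpace U]
    (ξ₁ ξ₂ : Measure (EuclideanSpace ℝ (Fin n) × ProbabilityMeasure U)) : ℝ :=
  sSup {r : ℝ | ∃ f : EuclideanSpace ℝ (Fin n) × ProbabilityMeasure U → ℝ,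
    (∀ x₁ x₂ q₁ q₂, |f (x₁, q₁) - f (x₂, q₂)| ≤ dist x₁ x₂ + fmDistP q₁ q₂) ∧
    r = (∫ p, f p ∂ξ₁) - ∫ p, f p ∂ξ₂}

open Set Filter Metric
open scoped BoundedContinuousFunction

section FortetMourier

variable {U : Type*} [MeasurableSpace U]

lemma abs_integral_le_one (q : ProbabilityMeasure U) {g : U → ℝ} (hg : ∀ u, |g u| ≤ 1) :
    |∫ u, g u ∂(q : Measure U)| ≤ 1 := by
  simpa using norm_integral_le_of_norm_le_const (μ := (q : Measure U)) (C := 1)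
    (Eventually.of_forall fun u => (Real.norm_eq_abs _).trans_le (hg u))

lemma integral_sub_integral_le_two (q₁ q₂ : ProbabilityMeasure U) {g : U → ℝ}
    (hg : ∀ u, |g u| ≤ 1) :
    (∫ u, g u ∂(q₁ : Measure U)) - ∫ u, g u ∂(q₂ : Measure U) ≤ 2 := by
  have h₁ := (abs_le.1 (abs_integral_le_one q₁ hg)).2
  have h₂ := (abs_le.1 (abs_integral_le_one q₂ hg)).1
  linarith

lemma abs_integral_sub_integral_le_of_abs_sub_le (q : ProbabilityMeasure U) {g h : U → ℝ}
    (hg : Integrable g (q : Measure U)) (hh : Integrable h (q : Measure U)) {ε : ℝ}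
    (hgh : ∀ u, |g u - h u| ≤ ε) :
    |(∫ u, g u ∂(q : Measure U)) - ∫ u, h u ∂(q : Measure U)| ≤ ε := by
  rw [← integral_sub hg hh]
  simpa using norm_integral_le_of_norm_le_const (μ := (q : Measure U)) (C := ε)
    (Eventually.of_forall fun u => (Real.norm_eq_abs _).trans_le (hgh u))

variable [MetricSpace U]

lemma fmDistP_bddAbove (q₁ q₂ : ProbabilityMeasure U) :
    BddAbove {r : ℝ | ∃ g : U → ℝ, LipschitzWith 1 g ∧ (∀ u, |g u| ≤ 1) ∧
      r = (∫ u, g u ∂(q₁ : Measure U)) - ∫ u, g u ∂(q₂ : Measure U)} :=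
  ⟨2, by rintro r ⟨g, -, hg, rfl⟩; exact integral_sub_integral_le_two q₁ q₂ hg⟩

lemma integral_sub_integral_le_fmDistP (q₁ q₂ : ProbabilityMeasure U) {g : U → ℝ}
    (hg : LipschitzWith 1 g) (hb : ∀ u, |g u| ≤ 1) :
    (∫ u, g u ∂(q₁ : Measure U)) - ∫ u, g u ∂(q₂ : Measure U) ≤ fmDistP q₁ q₂ :=
  le_csSup (fmDistP_bddAbove q₁ q₂) ⟨g, hg, hb, rfl⟩

lemma abs_integral_sub_integral_le_fmDistP (q₁ q₂ : ProbabilityMeasure U) {g : U → ℝ}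
    (hg : LipschitzWith 1 g) (hb : ∀ u, |g u| ≤ 1) :
    |(∫ u, g u ∂(q₁ : Measure U)) - ∫ u, g u ∂(q₂ : Measure U)| ≤ fmDistP q₁ q₂ := by
  refine abs_sub_le_iff.2 ⟨integral_sub_integral_le_fmDistP q₁ q₂ hg hb, ?_⟩
  have := integral_sub_integral_le_fmDistP q₁ q₂ hg.neg (g := fun u => -g u)
    (fun u => by simpa using hb u)
  simp only [integral_neg] at this
  linarith

lemma fmDistP_le_of_forall {q₁ q₂ : ProbabilityMeasure U} {c : ℝ} (hc : 0 ≤ c)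
    (h : ∀ g : U → ℝ, LipschitzWith 1 g → (∀ u, |g u| ≤ 1) →
      (∫ u, g u ∂(q₁ : Measure U)) - ∫ u, g u ∂(q₂ : Measure U) ≤ c) :
    fmDistP q₁ q₂ ≤ c :=
  Real.sSup_le (by rintro r ⟨g, hg, hb, rfl⟩; exact h g hg hb) hc

lemma fmDistP_nonneg (q₁ q₂ : ProbabilityMeasure U) : 0 ≤ fmDistP q₁ q₂ := by
  simpa using integral_sub_integral_le_fmDistP q₁ q₂ (g := fun _ => 0)
    ((LipschitzWith.const 0).weaken zero_le_one) (fun _ => by simp)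

lemma fmDistP_le_two (q₁ q₂ : ProbabilityMeasure U) : fmDistP q₁ q₂ ≤ 2 :=
  fmDistP_le_of_forall zero_le_two fun _ _ hb => integral_sub_integral_le_two q₁ q₂ hb

@[simp]
lemma fmDistP_self (q : ProbabilityMeasure U) : fmDistP q q = 0 :=
  le_antisymm (fmDistP_le_of_forall le_rfl fun _ _ _ => by simp) (fmDistP_nonneg q q)

end FortetMourier

section Compact

variable {U : Type*} [MetricSpace U] [CompactSpace U]

lemma totallyBounded_lipschitzWith_one :
    TotallyBounded {g : U →ᵇ ℝ | LipschitzWith 1 g ∧ ∀ u, |g u| ≤ 1} := by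
  refine (BoundedContinuousFunction.arzela_ascoli (Icc (-1) 1) isCompact_Icc _
    (fun g u hg => abs_le.1 (hg.2 u)) ?_).totallyBounded.subset subset_closure
  exact (LipschitzWith.uniformEquicontinuous _ 1 fun g => g.2.1).equicontinuous

variable [MeasurableSpace U] [OpensMeasurableSpace U]

lemma fmDistP_le_three_mul {ε : ℝ} (hε : 0 ≤ ε) {T : Set (U →ᵇ ℝ)}
    (hT : {g : U →ᵇ ℝ | LipschitzWith 1 g ∧ ∀ u, |g u| ≤ 1} ⊆ ⋃ t ∈ T, ball t ε)
    {q q' : ProbabilityMeasure U}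
    (hqq' : ∀ t ∈ T, |(∫ u, t u ∂(q : Measure U)) - ∫ u, t u ∂(q' : Measure U)| ≤ ε) :
    fmDistP q q' ≤ 3 * ε := by
  refine fmDistP_le_of_forall (by positivity) fun g hg hb => ?_
  let G : U →ᵇ ℝ := .mkOfCompact ⟨g, hg.continuous⟩
  obtain ⟨t, htT, hGt⟩ := mem_iUnion₂.1 (hT (show G ∈ _ from ⟨hg, hb⟩))
  have hclose : ∀ u, |g u - t u| ≤ ε := fun u =>
    ((BoundedContinuousFunction.dist_coe_le_dist u).trans (mem_ball.1 hGt).le)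
  have h₁ := abs_le.1 <|
    abs_integral_sub_integral_le_of_abs_sub_le q (G.integrable _) (t.integrable _) hclose
  have h₂ := abs_le.1 <|
    abs_integral_sub_integral_le_of_abs_sub_le q' (G.integrable _) (t.integrable _) hclose
  have h₃ := abs_le.1 (hqq' t htT)
  change (∫ u, G u ∂(q : Measure U)) - ∫ u, G u ∂(q' : Measure U) ≤ 3 * ε
  linarith [h₁.2, h₂.1, h₃.2]

end Compact

lemma stronglyMeasurable_integral_probabilityMeasure {U E : Type*} [MeasurableSpace U]
    [NormedAddCommGroup E] [NormedSpace ℝ E] {g : U → E} (hg : StronglyMeasurable g) :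
    StronglyMeasurable fun q : ProbabilityMeasure U => ∫ u, g u ∂(q : Measure U) :=
  hg.integral_kernel (κ := ⟨Subtype.val, measurable_subtype_coe⟩)

lemma measurable_of_forall_dist_le {α β : Type*} [MeasurableSpace α] [PseudoMetricSpace β]
    [MeasurableSpace β] [BorelSpace β] {f : α → β}
    (h : ∀ ε > 0, ∃ g : α → β, Measurable g ∧ ∀ x, dist (g x) (f x) ≤ ε) : Measurable f := by
  choose g hg hgf using fun m : ℕ => h (1 / (m + 1)) (by positivity)
  refine measurable_of_tendsto_metrizable hg (tendsto_pi_nhds.2 fun x => ?_)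
  exact tendsto_iff_dist_tendsto_zero.2 (squeeze_zero (fun _ => dist_nonneg)
    (fun m => hgf m x) tendsto_one_div_add_atTop_nhds_zero_nat)

section Measurability

variable {U : Type*} [MetricSpace U] [CompactSpace U] [MeasurableSpace U] [OpensMeasurableSpace U]

lemma exists_measurable_fmDistP_partition {ε : ℝ} (hε : 0 < ε) :
    ∃ (k : ℕ) (cell : ProbabilityMeasure U → Fin k → ℤ), Measurable cell ∧
      ∀ q q', cell q = cell q' → fmDistP q q' ≤ 3 * ε := by
  obtain ⟨T, -, hTfin, hT⟩ :=
    finite_approx_of_totallyBounded (totallyBounded_lipschitzWith_one (U := U)) ε hε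
  obtain ⟨k, t, rfl⟩ := hTfin.fin_embedding
  refine ⟨k, fun q i => ⌊(∫ u, t i u ∂(q : Measure U)) / ε⌋, measurable_pi_lambda _ fun i => ?_,
    fun q q' hqq' => fmDistP_le_three_mul hε.le hT ?_⟩
  · exact ((stronglyMeasurable_integral_probabilityMeasure
      (t i).continuous.stronglyMeasurable).measurable.div_const ε).floor
  · rintro _ ⟨i, rfl⟩
    have := Int.abs_sub_lt_one_of_floor_eq_floor (congrFun hqq' i)
    rw [← sub_div, abs_div, abs_of_pos hε, div_lt_one hε] at this
    exact this.le

lemma measurable_of_abs_sub_le_dist_add_fmDistP {X : Type*} [PseudoMetricSpace X]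
    [MeasurableSpace X] [OpensMeasurableSpace X] {f : X × ProbabilityMeasure U → ℝ}
    (hf : ∀ x₁ x₂ q₁ q₂, |f (x₁, q₁) - f (x₂, q₂)| ≤ dist x₁ x₂ + fmDistP q₁ q₂) :
    Measurable f := by
  rcases isEmpty_or_nonempty (ProbabilityMeasure U) with hU | hU
  · exact Subsingleton.measurable
  refine measurable_of_forall_dist_le fun ε hε => ?_
  obtain ⟨k, cell, hcell, hfibre⟩ := exists_measurable_fmDistP_partition (U := U) (ε := ε / 3)
    (by positivity)
  let rep := Function.invFun cell
  have hrep : ∀ z, Measurable fun x => f (x, rep z) := fun z =>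
    (LipschitzWith.of_dist_le_mul (K := 1) fun x x' => by
      simpa [Real.dist_eq] using hf x x' (rep z) (rep z)).continuous.measurable
  refine ⟨fun p => f (p.1, rep (cell p.2)), ?_, fun p => ?_⟩
  · have hF : Measurable fun y : X × (Fin k → ℤ) => f (y.1, rep y.2) :=
      measurable_from_prod_countable_left hrep
    exact hF.comp (measurable_fst.prodMk (hcell.comp measurable_snd))
  · calc dist (f (p.1, rep (cell p.2))) (f p)
        ≤ dist p.1 p.1 + fmDistP (rep (cell p.2)) p.2 := hf _ _ _ _
      _ ≤ 3 * (ε / 3) := by simpa using hfibre _ _ (Function.invFun_eq ⟨p.2, rfl⟩)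
      _ = ε := by ring

end Measurability

lemma lipschitzWith_two_of_abs_sub_le_dist_add_dist {X Y : Type*} [PseudoMetricSpace X]
    [PseudoMetricSpace Y] {f : X × Y → ℝ}
    (hf : ∀ x₁ x₂ y₁ y₂, |f (x₁, y₁) - f (x₂, y₂)| ≤ dist x₁ x₂ + dist y₁ y₂) :
    LipschitzWith 2 f := by
  refine LipschitzWith.of_dist_le_mul fun p p' => ?_
  have h₁ : dist p.1 p'.1 ≤ dist p p' := by rw [Prod.dist_eq]; exact le_max_left _ _
  have h₂ : dist p.2 p'.2 ≤ dist p p' := by rw [Prod.dist_eq]; exact le_max_right _ _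
  rw [Real.dist_eq, NNReal.coe_two]
  linarith [hf p.1 p'.1 p.2 p'.2]

lemma abs_integral_sub_integral_le_dist_add_fmDistP {X U : Type*} [PseudoMetricSpace X]
    [MetricSpace U] [MeasurableSpace U] [OpensMeasurableSpace U] {f : X × U → ℝ}
    (hf : ∀ x₁ x₂ u₁ u₂, |f (x₁, u₁) - f (x₂, u₂)| ≤ dist x₁ x₂ + dist u₁ u₂)
    (hb : ∀ p, |f p| ≤ 1) (x₁ x₂ : X) (q₁ q₂ : ProbabilityMeasure U) :
    |(∫ u, f (x₁, u) ∂(q₁ : Measure U)) - ∫ u, f (x₂, u) ∂(q₂ : Measure U)| ≤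
      dist x₁ x₂ + fmDistP q₁ q₂ := by
  have hlip : ∀ x, LipschitzWith 1 fun u => f (x, u) := fun x =>
    LipschitzWith.of_dist_le_mul fun u u' => by simpa [Real.dist_eq] using hf x x u u'
  have hint : ∀ x, Integrable (fun u => f (x, u)) (q₁ : Measure U) := fun x =>
    (integrable_const 1).mono' (hlip x).continuous.aestronglyMeasurable
      (Eventually.of_forall fun u => (Real.norm_eq_abs _).trans_le (hb _))
  have hx := abs_integral_sub_integral_le_of_abs_sub_le q₁ (hint x₁) (hint x₂)
    fun u => by simpa using hf x₁ x₂ u u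
  have hq := abs_integral_sub_integral_le_fmDistP q₁ q₂ (hlip x₂) fun u => hb _
  exact (abs_sub_le _ _ _).trans (add_le_add hx hq)

section KantorovichRubinstein

variable {n : ℕ} {U : Type*} [MetricSpace U] [MeasurableSpace U]

lemma abs_sub_le_norm_add_two {X : Type*} [SeminormedAddCommGroup X]
    {f : X × ProbabilityMeasure U → ℝ}
    (hf : ∀ x₁ x₂ q₁ q₂, |f (x₁, q₁) - f (x₂, q₂)| ≤ dist x₁ x₂ + fmDistP q₁ q₂)
    (x : X) (q q₀ : ProbabilityMeasure U) :
    |f (x, q) - f (0, q₀)| ≤ ‖x‖ + 2 := by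
  have := hf x 0 q q₀
  rw [dist_zero_right] at this
  linarith [fmDistP_le_two q q₀]

variable [CompactSpace U] [OpensMeasurableSpace U]

lemma abs_integral_sub_le_integral_norm_add_two
    {f : EuclideanSpace ℝ (Fin n) × ProbabilityMeasure U → ℝ}
    (hf : ∀ x₁ x₂ q₁ q₂, |f (x₁, q₁) - f (x₂, q₂)| ≤ dist x₁ x₂ + fmDistP q₁ q₂)
    (ξ : Measure (EuclideanSpace ℝ (Fin n) × ProbabilityMeasure U)) [IsProbabilityMeasure ξ]
    (hξ : Integrable (fun p => ‖p.1‖ ^ 2) ξ) (q₀ : ProbabilityMeasure U) :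
    |(∫ p, f p ∂ξ) - f (0, q₀)| ≤ ∫ p, (‖p.1‖ + 2) ∂ξ := by
  have hnorm : Integrable (fun p => ‖p.1‖ + 2) ξ :=
    (((memLp_two_iff_integrable_sq measurable_fst.norm.aestronglyMeasurable).2 hξ).integrable
      one_le_two).add (integrable_const 2)
  have hbound : ∀ p, ‖f p - f (0, q₀)‖ ≤ ‖p.1‖ + 2 := fun p =>
    (Real.norm_eq_abs _).trans_le (abs_sub_le_norm_add_two hf p.1 p.2 q₀)
  have hfc : Integrable (fun p => f p - f (0, q₀)) ξ :=
    hnorm.mono' ((measurable_of_abs_sub_le_dist_add_fmDistP hf).sub_const _).aestronglyMeasurable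
      (Eventually.of_forall hbound)
  have hf_int : Integrable f ξ :=
    (hfc.add (integrable_const (f (0, q₀)))).congr (ae_of_all _ fun _ => sub_add_cancel _ _)
  rw [← Real.norm_eq_abs, show (∫ p, f p ∂ξ) - f (0, q₀) = ∫ p, (f p - f (0, q₀)) ∂ξ by
    simp [integral_sub hf_int (integrable_const _)]]
  exact norm_integral_le_of_norm_le hnorm (Eventually.of_forall hbound)

variable {ξ₁ ξ₂ : Measure (EuclideanSpace ℝ (Fin n) × ProbabilityMeasure U)}
  [IsProbabilityMeasure ξ₁] [IsProbabilityMeasure ξ₂]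

lemma dKRV_bddAbove (hξ₁ : Integrable (fun p => ‖p.1‖ ^ 2) ξ₁)
    (hξ₂ : Integrable (fun p => ‖p.1‖ ^ 2) ξ₂) :
    BddAbove {r : ℝ | ∃ f : EuclideanSpace ℝ (Fin n) × ProbabilityMeasure U → ℝ,
      (∀ x₁ x₂ q₁ q₂, |f (x₁, q₁) - f (x₂, q₂)| ≤ dist x₁ x₂ + fmDistP q₁ q₂) ∧
      r = (∫ p, f p ∂ξ₁) - ∫ p, f p ∂ξ₂} := by
  obtain ⟨-, q₀⟩ := nonempty_of_isProbabilityMeasure ξ₁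
  refine ⟨(∫ p, (‖p.1‖ + 2) ∂ξ₁) + ∫ p, (‖p.1‖ + 2) ∂ξ₂, ?_⟩
  rintro r ⟨f, hf, rfl⟩
  have h₁ := abs_le.1 (abs_integral_sub_le_integral_norm_add_two hf ξ₁ hξ₁ q₀)
  have h₂ := abs_le.1 (abs_integral_sub_le_integral_norm_add_two hf ξ₂ hξ₂ q₀)
  linarith [h₁.2, h₂.1]

lemma integral_sub_integral_le_dKRV (hξ₁ : Integrable (fun p => ‖p.1‖ ^ 2) ξ₁)
    (hξ₂ : Integrable (fun p => ‖p.1‖ ^ 2) ξ₂)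
    {f : EuclideanSpace ℝ (Fin n) × ProbabilityMeasure U → ℝ}
    (hf : ∀ x₁ x₂ q₁ q₂, |f (x₁, q₁) - f (x₂, q₂)| ≤ dist x₁ x₂ + fmDistP q₁ q₂) :
    (∫ p, f p ∂ξ₁) - ∫ p, f p ∂ξ₂ ≤ dKRV ξ₁ ξ₂ :=
  le_csSup (dKRV_bddAbove hξ₁ hξ₂) ⟨f, hf, rfl⟩

lemma dKRV_nonneg (hξ₁ : Integrable (fun p => ‖p.1‖ ^ 2) ξ₁)
    (hξ₂ : Integrable (fun p => ‖p.1‖ ^ 2) ξ₂) : 0 ≤ dKRV ξ₁ ξ₂ := by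
  simpa using integral_sub_integral_le_dKRV hξ₁ hξ₂ (f := fun _ => 0)
    fun _ _ q₁ q₂ => by simpa using add_nonneg dist_nonneg (fmDistP_nonneg q₁ q₂)

theorem fmDistK_le_dKRV (hξ₁ : Integrable (fun p => ‖p.1‖ ^ 2) ξ₁)
    (hξ₂ : Integrable (fun p => ‖p.1‖ ^ 2) ξ₂) {ρ₁ ρ₂ : Measure (EuclideanSpace ℝ (Fin n) × U)}
    (hρ₁ : ∀ f : EuclideanSpace ℝ (Fin n) × U → ℝ, Continuous f → (∀ p, |f p| ≤ 1) →
      ∫ p, f p ∂ρ₁ = ∫ p, (∫ u, f (p.1, u) ∂(p.2 : Measure U)) ∂ξ₁)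
    (hρ₂ : ∀ f : EuclideanSpace ℝ (Fin n) × U → ℝ, Continuous f → (∀ p, |f p| ≤ 1) →
      ∫ p, f p ∂ρ₂ = ∫ p, (∫ u, f (p.1, u) ∂(p.2 : Measure U)) ∂ξ₂) :
    fmDistK ρ₁ ρ₂ ≤ dKRV ξ₁ ξ₂ := by
  refine Real.sSup_le ?_ (dKRV_nonneg hξ₁ hξ₂)
  rintro r ⟨f, hf, hb, rfl⟩
  have hfc := (lipschitzWith_two_of_abs_sub_le_dist_add_dist hf).continuous
  rw [hρ₁ f hfc hb, hρ₂ f hfc hb]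
  exact integral_sub_integral_le_dKRV hξ₁ hξ₂ fun x₁ x₂ q₁ q₂ =>
    abs_integral_sub_integral_le_dist_add_fmDistP hf hb x₁ x₂ q₁ q₂

end KantorovichRubinstein

/-- the affine averaging map `𝒫 : 𝒫₂(ℝⁿ × 𝒫(U)) → 𝒫₂(ℝⁿ × U)` is
`1`-Lipschitz from the Kantorovich–Rubinstein metric to the Fortet–Mourier metric;
consequently any Lipschitz `h` induces a Lipschitz extension `h̃ = h ∘ 𝒫`.
Here `ρᵢ = 𝒫(ξᵢ)` is characterized via bounded continuous test functions. -/
theorem stmt1 {n : ℕ} {U : Type*} [MetricSpace U] [CompactSpace U]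
    [MeasurableSpace U] [BorelSpace U]
    (ξ₁ ξ₂ : Measure (EuclideanSpace ℝ (Fin n) × ProbabilityMeasure U))
    [IsProbabilityMeasure ξ₁] [IsProbabilityMeasure ξ₂]
    (hξ₁2 : Integrable (fun p => ‖p.1‖ ^ 2) ξ₁) (hξ₂2 : Integrable (fun p => ‖p.1‖ ^ 2) ξ₂)
    (ρ₁ ρ₂ : Measure (EuclideanSpace ℝ (Fin n) × U))
    [IsProbabilityMeasure ρ₁] [IsProbabilityMeasure ρ₂]
    (hρ₁ : ∀ f : EuclideanSpace ℝ (Fin n) × U → ℝ, Continuous f → (∀ p, |f p| ≤ 1) →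
      ∫ p, f p ∂ρ₁ = ∫ p, (∫ u, f (p.1, u) ∂(p.2 : Measure U)) ∂ξ₁)
    (hρ₂ : ∀ f : EuclideanSpace ℝ (Fin n) × U → ℝ, Continuous f → (∀ p, |f p| ≤ 1) →
      ∫ p, f p ∂ρ₂ = ∫ p, (∫ u, f (p.1, u) ∂(p.2 : Measure U)) ∂ξ₂) :
    fmDistK ρ₁ ρ₂ ≤ dKRV ξ₁ ξ₂ ∧
    ∀ (L : ℝ) (h : Measure (EuclideanSpace ℝ (Fin n) × U) → ℝ), 0 ≤ L →
      (∀ ρ ρ' : Measure (EuclideanSpace ℝ (Fin n) × U), IsProbabilityMeasure ρ →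
        IsProbabilityMeasure ρ' → |h ρ - h ρ'| ≤ L * fmDistK ρ ρ') →
      |h ρ₁ - h ρ₂| ≤ L * dKRV ξ₁ ξ₂ := by
  have hK := fmDistK_le_dKRV hξ₁2 hξ₂2 hρ₁ hρ₂
  refine ⟨hK, fun L h hL hh => ?_⟩
  calc |h ρ₁ - h ρ₂| ≤ L * fmDistK ρ₁ ρ₂ := hh ρ₁ ρ₂ inferInstance inferInstance
    _ ≤ L * dKRV ξ₁ ξ₂ := mul_le_mul_of_nonneg_left hK hL
end

section
/- Consider the Riccati ODE on $[0,T]$: $\dot\beta_t + \sigma^2 \beta_t - \frac{b_3^2\, \beta_t^2}{1 + \Gamma \beta_t} = 0$ with terminal condition $\beta_T = c$, where $\sigma, b_3 \in \mathbb{R}$, $\Gamma := \int_Z \gamma^2(z)\,\lambda(\mathrm{d}z) \ge 0$, and $c \ge 0$. Then this ODE admits a unique continuously differentiable solution $\beta : [0,T] \to \mathbb{R}$ satisfying $\beta_t \ge 0$ and $1 + \Gamma\beta_t > 0$ for all $t \in [0,T]$. -/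
/-! The field `x ↦ -σ²x + b₃²x²/(1 + Γx)` is smooth, hence locally Lipschitz, on `[0, ∞)`.
Frozen outside `[0, A]` with `A = c e^{σ²T}`, it becomes globally Lipschitz and bounded, so
Picard–Lindelöf solves the terminal value problem for the frozen field. That solution is
nonnegative: the frozen field vanishes on `(-∞, 0]`, so a solution that were negative at some
time would stay constant up to `T`, against `β_T = c ≥ 0`. It is at most `A`: the field is at
least `-σ²x` on `[0, ∞)`, so `e^{σ²t} β_t` is nondecreasing. Hence it solves the original
equation. Two nonnegative solutions take values in a compact subset of `[0, ∞)`, on which the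
field is Lipschitz, so they agree. -/

open MeasureTheory Set Real
open scoped NNReal

section AutonomousODE

variable {E : Type*} [NormedAddCommGroup E] [NormedSpace ℝ E] {v : E → E} {K : ℝ≥0}

theorem exists_forall_mem_Icc_hasDerivAt_of_lipschitzWith [CompleteSpace E]
    (hv : LipschitzWith K v) {M : ℝ} (hM : ∀ x, ‖v x‖ ≤ M) {a b t₀ : ℝ} (ht₀ : t₀ ∈ Icc a b)
    (x₀ : E) : ∃ f : ℝ → E, f t₀ = x₀ ∧ ∀ t ∈ Icc a b, HasDerivAt f (v (f t)) t := by
  have hpl : IsPicardLindelof (fun _ ↦ v) (tmin := a - 1) (tmax := b + 1)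
      ⟨t₀, by constructor <;> linarith [ht₀.1, ht₀.2]⟩ x₀
      (M.toNNReal * (b - a + 2).toNNReal) 0 M.toNNReal K :=
    .of_time_independent (fun x _ ↦ (hM x).trans (le_coe_toNNReal M)) hv.lipschitzOnWith (by
      rw [NNReal.coe_mul, NNReal.coe_zero, sub_zero]
      gcongr
      exact le_coe_toNNReal _ |>.trans' (max_le (by linarith [ht₀.1]) (by linarith [ht₀.2])))
  obtain ⟨f, hf₀, hf⟩ := hpl.exists_eq_forall_mem_Icc_hasDerivWithinAt₀
  exact ⟨f, hf₀, fun t ht ↦ (hf t ⟨by linarith [ht.1], by linarith [ht.2]⟩).hasDerivAt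
    (Icc_mem_nhds (by linarith [ht.1]) (by linarith [ht.2]))⟩

theorem eqOn_const_of_apply_eq_zero (hv : LipschitzWith K v) {f : ℝ → E} {a b : ℝ}
    (hf : ∀ t ∈ Icc a b, HasDerivAt f (v (f t)) t) (ha : v (f a) = 0) :
    EqOn f (fun _ ↦ f a) (Icc a b) :=
  ODE_solution_unique (v := fun _ ↦ v) (fun _ ↦ hv) (HasDerivAt.continuousOn hf)
    (fun t ht ↦ (hf t (Ico_subset_Icc_self ht)).hasDerivWithinAt) continuousOn_const
    (fun t _ ↦ by simpa only [ha] using hasDerivWithinAt_const t _ (f a)) rfl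

theorem eqOn_of_locallyLipschitzOn {S : Set E} (hv : LocallyLipschitzOn S v) {f g : ℝ → E}
    {a b : ℝ} (hf : ∀ t ∈ Icc a b, HasDerivAt f (v (f t)) t)
    (hg : ∀ t ∈ Icc a b, HasDerivAt g (v (g t)) t) (hfS : MapsTo f (Icc a b) S)
    (hgS : MapsTo g (Icc a b) S) (hb : f b = g b) : EqOn f g (Icc a b) := by
  have hfc := HasDerivAt.continuousOn hf
  have hgc := HasDerivAt.continuousOn hg
  obtain ⟨K, hK⟩ := (hv.mono (union_subset hfS.image_subset hgS.image_subset))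
    |>.exists_lipschitzOnWith_of_compact
      ((isCompact_Icc.image_of_continuousOn hfc).union (isCompact_Icc.image_of_continuousOn hgc))
  exact ODE_solution_unique_of_mem_Icc_left (v := fun _ ↦ v)
    (s := fun _ ↦ f '' Icc a b ∪ g '' Icc a b) (fun _ _ ↦ hK)
    hfc (fun t ht ↦ (hf t (Ioc_subset_Icc_self ht)).hasDerivWithinAt)
    (fun t ht ↦ .inl (mem_image_of_mem f (Ioc_subset_Icc_self ht)))
    hgc (fun t ht ↦ (hg t (Ioc_subset_Icc_self ht)).hasDerivWithinAt)
    (fun t ht ↦ .inr (mem_image_of_mem g (Ioc_subset_Icc_self ht))) hb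

end AutonomousODE

theorem le_exp_mul_mul_of_neg_mul_le_deriv {f f' : ℝ → ℝ} {k a b : ℝ}
    (hf : ∀ t ∈ Icc a b, HasDerivAt f (f' t) t) (hf' : ∀ t ∈ Icc a b, -(k * f t) ≤ f' t) :
    ∀ t ∈ Icc a b, f t ≤ exp (k * (b - t)) * f b := by
  have hg : ∀ t ∈ Icc a b,
      HasDerivAt (fun t ↦ exp (k * t) * f t) (exp (k * t) * (f' t + k * f t)) t := by
    intro t ht
    have hexp : HasDerivAt (fun t ↦ exp (k * t)) (exp (k * t) * k) t := by
      simpa using ((hasDerivAt_id t).const_mul k).exp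
    exact (hexp.mul (hf t ht)).congr_deriv (by ring)
  have hmono : MonotoneOn (fun t ↦ exp (k * t) * f t) (Icc a b) :=
    monotoneOn_of_hasDerivWithinAt_nonneg (convex_Icc a b) (HasDerivAt.continuousOn hg)
      (fun t ht ↦ (hg t (interior_subset ht)).hasDerivWithinAt)
      (fun t ht ↦ mul_nonneg (exp_pos _).le (by linarith [hf' t (interior_subset ht)]))
  intro t ht
  calc f t = exp (-(k * t)) * (exp (k * t) * f t) := by
        rw [← mul_assoc, ← exp_add, neg_add_cancel, exp_zero, one_mul]
    _ ≤ exp (-(k * t)) * (exp (k * b) * f b) :=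
        mul_le_mul_of_nonneg_left (hmono ht (right_mem_Icc.2 (ht.1.trans ht.2)) ht.2)
          (exp_pos _).le
    _ = exp (k * (b - t)) * f b := by
        rw [← mul_assoc, ← exp_add, show -(k * t) + k * b = k * (b - t) by ring]

noncomputable def riccatiField (Γ s b x : ℝ) : ℝ := -(s * x) + b ^ 2 * x ^ 2 / (1 + Γ * x)

section Riccati

variable {Γ s b : ℝ}

theorem riccatiField_zero : riccatiField Γ s b 0 = 0 := by simp [riccatiField]

theorem neg_mul_le_riccatiField (hΓ : 0 ≤ Γ) {x : ℝ} (hx : 0 ≤ x) :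
    -(s * x) ≤ riccatiField Γ s b x :=
  le_add_of_nonneg_right (by positivity)

theorem contDiffOn_riccatiField (hΓ : 0 ≤ Γ) {n : WithTop ℕ∞} :
    ContDiffOn ℝ n (riccatiField Γ s b) (Ici 0) := by
  refine ContDiffOn.add (by fun_prop) (ContDiffOn.div (by fun_prop) (by fun_prop) fun x hx ↦ ?_)
  have : (0 : ℝ) ≤ x := hx
  positivity

theorem locallyLipschitzOn_riccatiField (hΓ : 0 ≤ Γ) :
    LocallyLipschitzOn (Ici 0) (riccatiField Γ s b) :=
  (contDiffOn_riccatiField hΓ).locallyLipschitzOn (convex_Ici 0)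

theorem exists_riccati_solution (hΓ : 0 ≤ Γ) (hs : 0 ≤ s) {t₀ T c : ℝ} (hT : t₀ ≤ T)
    (hc : 0 ≤ c) : ∃ β : ℝ → ℝ, β T = c ∧
      ∀ t ∈ Icc t₀ T, HasDerivAt β (riccatiField Γ s b (β t)) t ∧ 0 ≤ β t := by
  set A := exp (s * (T - t₀)) * c
  have hA : 0 ≤ A := by positivity
  obtain ⟨K, hK⟩ := ((locallyLipschitzOn_riccatiField (s := s) (b := b) hΓ).mono
    Icc_subset_Ici_self).exists_lipschitzOnWith_of_compact isCompact_Icc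
  set v := fun x ↦ riccatiField Γ s b (projIcc 0 A hA x)
  have hv : LipschitzWith K v := by
    have h := hK.to_restrict.comp (LipschitzWith.projIcc hA)
    rw [mul_one] at h
    exact h
  obtain ⟨M, hM⟩ := isCompact_Icc.exists_bound_of_continuousOn hK.continuousOn
  obtain ⟨β, hβT, hβ⟩ := exists_forall_mem_Icc_hasDerivAt_of_lipschitzWith hv
    (fun x ↦ hM _ (projIcc 0 A hA x).2) (right_mem_Icc.2 hT) c
  have hβ₀ : ∀ t ∈ Icc t₀ T, 0 ≤ β t := by
    intro t ht
    by_contra! hneg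
    have hv₀ : v (β t) = 0 := by
      simp only [v, projIcc_of_le_left _ hneg.le]
      exact riccatiField_zero
    have hconst : β T = β t :=
      eqOn_const_of_apply_eq_zero hv (fun τ hτ ↦ hβ τ ⟨ht.1.trans hτ.1, hτ.2⟩) hv₀ ⟨ht.2, le_rfl⟩
    linarith
  have hβA : ∀ t ∈ Icc t₀ T, β t ≤ A := by
    intro t ht
    have hlow : ∀ τ ∈ Icc t₀ T, -(s * β τ) ≤ v (β τ) := by
      intro τ hτ
      have hproj : (projIcc 0 A hA (β τ) : ℝ) ≤ β τ := max_le (hβ₀ τ hτ) (min_le_right _ _)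
      calc -(s * β τ) ≤ -(s * projIcc 0 A hA (β τ)) := by gcongr
        _ ≤ v (β τ) := neg_mul_le_riccatiField hΓ (projIcc 0 A hA (β τ)).2.1
    calc β t ≤ exp (s * (T - t)) * β T := le_exp_mul_mul_of_neg_mul_le_deriv hβ hlow t ht
      _ ≤ exp (s * (T - t₀)) * c := by rw [hβT]; gcongr; exact ht.1
  refine ⟨β, hβT, fun t ht ↦ ⟨?_, hβ₀ t ht⟩⟩
  simpa only [v, projIcc_of_mem _ ⟨hβ₀ t ht, hβA t ht⟩] using hβ t ht

end Riccati

theorem stmt11_general {Z : Type*} [MeasurableSpace Z] (lam : Measure Z) (γ : Z → ℝ)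
    (T σ b3 c : ℝ) (hT : 0 < T) (hc : 0 ≤ c) :
    let Γ : ℝ := ∫ z, (γ z) ^ 2 ∂lam
    ∃ β : ℝ → ℝ,
      (∀ t ∈ Set.Icc (0 : ℝ) T,
        HasDerivAt β (-(σ ^ 2 * β t) + b3 ^ 2 * (β t) ^ 2 / (1 + Γ * β t)) t) ∧
      (ContinuousOn (fun t => -(σ ^ 2 * β t) + b3 ^ 2 * (β t) ^ 2 / (1 + Γ * β t))
        (Set.Icc (0 : ℝ) T)) ∧
      β T = c ∧
      (∀ t ∈ Set.Icc (0 : ℝ) T, 0 ≤ β t ∧ 0 < 1 + Γ * β t) ∧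
      ∀ β' : ℝ → ℝ,
        (∀ t ∈ Set.Icc (0 : ℝ) T,
          HasDerivAt β' (-(σ ^ 2 * β' t) + b3 ^ 2 * (β' t) ^ 2 / (1 + Γ * β' t)) t) →
        β' T = c →
        (∀ t ∈ Set.Icc (0 : ℝ) T, 0 ≤ β' t ∧ 0 < 1 + Γ * β' t) →
        ∀ t ∈ Set.Icc (0 : ℝ) T, β' t = β t := by
  intro Γ
  have hΓ : 0 ≤ Γ := integral_nonneg fun z ↦ sq_nonneg (γ z)
  obtain ⟨β, hβT, hβ⟩ := exists_riccati_solution (b := b3) hΓ (sq_nonneg σ) hT.le hc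
  have hβ' : ∀ t ∈ Icc 0 T, HasDerivAt β (riccatiField Γ (σ ^ 2) b3 (β t)) t :=
    fun t ht ↦ (hβ t ht).1
  have hβ₀ : ∀ t ∈ Icc 0 T, 0 ≤ β t := fun t ht ↦ (hβ t ht).2
  refine ⟨β, hβ', ?_, hβT, fun t ht ↦ ⟨hβ₀ t ht, by have := hβ₀ t ht; positivity⟩, ?_⟩
  · exact (locallyLipschitzOn_riccatiField hΓ).continuousOn.comp
      (HasDerivAt.continuousOn hβ') hβ₀
  · intro β₁ hβ₁ hβ₁T hβ₁₀
    exact eqOn_of_locallyLipschitzOn (locallyLipschitzOn_riccatiField hΓ) hβ₁ hβ'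
      (fun t ht ↦ (hβ₁₀ t ht).1) hβ₀ (hβ₁T.trans hβT.symm)

/-- the Riccati ODE `β̇ + σ²β - b₃²β²/(1 + Γβ) = 0` on `[0, T]` with terminal
condition `β_T = c`, where `Γ = ∫_Z γ(z)² λ(dz) ≥ 0` and `c ≥ 0`, admits a unique
continuously differentiable solution satisfying `β_t ≥ 0` and `1 + Γ β_t > 0` on `[0, T]`. -/
theorem stmt11 {Z : Type*} [MeasurableSpace Z] (lam : Measure Z) (γ : Z → ℝ)
    (hγ2 : Integrable (fun z => (γ z) ^ 2) lam)
    (T σ b3 c : ℝ) (hT : 0 < T) (hc : 0 ≤ c) :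
    let Γ : ℝ := ∫ z, (γ z) ^ 2 ∂lam
    ∃ β : ℝ → ℝ,
      (∀ t ∈ Set.Icc (0 : ℝ) T,
        HasDerivAt β (-(σ ^ 2 * β t) + b3 ^ 2 * (β t) ^ 2 / (1 + Γ * β t)) t) ∧
      (ContinuousOn (fun t => -(σ ^ 2 * β t) + b3 ^ 2 * (β t) ^ 2 / (1 + Γ * β t))
        (Set.Icc (0 : ℝ) T)) ∧
      β T = c ∧
      (∀ t ∈ Set.Icc (0 : ℝ) T, 0 ≤ β t ∧ 0 < 1 + Γ * β t) ∧
      ∀ β' : ℝ → ℝ,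
        (∀ t ∈ Set.Icc (0 : ℝ) T,
          HasDerivAt β' (-(σ ^ 2 * β' t) + b3 ^ 2 * (β' t) ^ 2 / (1 + Γ * β' t)) t) →
        β' T = c →
        (∀ t ∈ Set.Icc (0 : ℝ) T, 0 ≤ β' t ∧ 0 < 1 + Γ * β' t) →
        ∀ t ∈ Set.Icc (0 : ℝ) T, β' t = β t :=
  stmt11_general lam γ T σ b3 c hT hc
end

section
/- Fix constants $a > 0$ and $\Gamma \ge 0$, and let $X$ be a square-integrable real random variable on a probability space, with $b_2, b_3 \in \mathbb{R}$ and $\beta, \eta \in \mathbb{R}$ satisfying $1 + \Gamma\beta > 0$ and $1 + \Gamma(\beta+\eta) > 0$. Consider the functional over $\alpha \in L^2(\Omega;\mathbb{R})$: $F(\alpha) = \frac{1}{2}(1 + \Gamma\beta)\,\mathbb{E}[\alpha^2] + \frac{\Gamma\eta}{2}(\mathbb{E}[\alpha])^2 + \beta\, b_3\, \mathbb{E}[\alpha X] + \big( \beta b_2 + \eta(b_2 + b_3) \big)\,\mathbb{E}[\alpha]\,\mathbb{E}[X]$. Then $F$ has the unique minimizer $\alpha^* = -\frac{(b_2+b_3)(\beta+\eta)}{1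 + \Gamma(\beta+\eta)}\,\mathbb{E}[X] - \frac{b_3\beta}{1 + \Gamma\beta}\,(X - \mathbb{E}[X])$. -/
open MeasureTheory ProbabilityTheory

/-!
Writing `X̄ = E[X]`, the functional
`F(ξ) = a E[ξ²] + b E[ξX] + c (E ξ)² + d E ξ` has the pointwise gradient
`2a ξ + b X + 2c E ξ + d`, which vanishes identically at the affine function
`ξ* = -(b X̄ + d) / (2(a+c)) - b/(2a) (X - X̄)`. Expanding around `ξ*` therefore leaves only the
quadratic part: `F(ξ) = F(ξ*) + a E[h²] + c (E h)²` with `h = ξ - ξ*`, and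
`a E[h²] + c (E h)² = a Var h + (a + c) (E h)²` is positive unless `h = 0` a.e.
The theorem is the case `a = (1+Γβ)/2`, `b = β b₃`, `c = Γη/2`, `d = (β b₂ + η(b₂+b₃)) X̄`.
-/

namespace MeanFieldQuadratic

variable {Ω : Type*} [MeasurableSpace Ω] {P : Measure Ω}

section Coercive

variable [IsProbabilityMeasure P] {a c : ℝ} {h : Ω → ℝ}

lemma mul_integral_sq_add_mul_sq_integral_eq (hh : MemLp h 2 P) :
    a * ∫ ω, h ω ^ 2 ∂P + c * (∫ ω, h ω ∂P) ^ 2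
      = a * Var[h; P] + (a + c) * (∫ ω, h ω ∂P) ^ 2 := by
  rw [variance_eq_sub hh]
  simp only [Pi.pow_apply]
  ring

lemma mul_integral_sq_add_mul_sq_integral_nonneg (ha : 0 < a) (hac : 0 < a + c)
    (hh : MemLp h 2 P) :
    0 ≤ a * ∫ ω, h ω ^ 2 ∂P + c * (∫ ω, h ω ∂P) ^ 2 := by
  rw [mul_integral_sq_add_mul_sq_integral_eq hh]
  have := variance_nonneg h P
  positivity

lemma ae_eq_zero_of_mul_integral_sq_add_mul_sq_integral_eq_zero (ha : 0 < a) (hac : 0 < a + c)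
    (hh : MemLp h 2 P) (h0 : a * ∫ ω, h ω ^ 2 ∂P + c * (∫ ω, h ω ∂P) ^ 2 = 0) :
    h =ᵐ[P] 0 := by
  rw [mul_integral_sq_add_mul_sq_integral_eq hh] at h0
  have hvar := variance_nonneg h P
  have hmean : (∫ ω, h ω ∂P) ^ 2 = 0 := by nlinarith [sq_nonneg (∫ ω, h ω ∂P)]
  have hvar0 : Var[h; P] = 0 := by nlinarith
  filter_upwards [ae_eq_integral_of_variance_eq_zero hh hvar0] with ω hω
  rw [hω, Pi.zero_apply, ← sq_eq_zero_iff.mp hmean]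

end Coercive

variable (P) (X : Ω → ℝ) (a b c d : ℝ)

noncomputable def cost (ξ : Ω → ℝ) : ℝ :=
  a * ∫ ω, ξ ω ^ 2 ∂P + b * ∫ ω, ξ ω * X ω ∂P + c * (∫ ω, ξ ω ∂P) ^ 2 + d * ∫ ω, ξ ω ∂P

noncomputable def minimizer : Ω → ℝ := fun ω =>
  -(b * ∫ ω', X ω' ∂P + d) / (2 * (a + c)) - b / (2 * a) * (X ω - ∫ ω', X ω' ∂P)

variable {P X a b c d}

lemma cost_eq_add [IsFiniteMeasure P] {ξ m : Ω → ℝ} (hX : MemLp X 2 P) (hξ : MemLp ξ 2 P)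
    (hm : MemLp m 2 P) :
    cost P X a b c d ξ = cost P X a b c d m + a * ∫ ω, (ξ ω - m ω) ^ 2 ∂P
      + c * (∫ ω, (ξ ω - m ω) ∂P) ^ 2
      + ∫ ω, (ξ ω - m ω) * (2 * a * m ω + b * X ω + (2 * c * ∫ ω', m ω' ∂P + d)) ∂P := by
  set k := 2 * c * ∫ ω', m ω' ∂P + d
  have iξ := hξ.integrable one_le_two
  have im := hm.integrable one_le_two
  have iξ2 : Integrable (fun ω => ξ ω ^ 2) P := hξ.integrable_sq
  have im2 : Integrable (fun ω => m ω ^ 2) P := hm.integrable_sq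
  have iξm : Integrable (fun ω => ξ ω * m ω) P := hξ.integrable_mul hm
  have iξX : Integrable (fun ω => ξ ω * X ω) P := hξ.integrable_mul hX
  have imX : Integrable (fun ω => m ω * X ω) P := hm.integrable_mul hX
  have hsq : ∫ ω, (ξ ω - m ω) ^ 2 ∂P
      = ∫ ω, ξ ω ^ 2 ∂P - 2 * ∫ ω, ξ ω * m ω ∂P + ∫ ω, m ω ^ 2 ∂P := by
    have : (fun ω => (ξ ω - m ω) ^ 2)
        = fun ω => (ξ ω ^ 2 - 2 * (ξ ω * m ω)) + m ω ^ 2 := funext fun ω => by ring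
    rw [this, integral_add, integral_sub, integral_const_mul]
    all_goals fun_prop
  have hlin : ∫ ω, (ξ ω - m ω) * (2 * a * m ω + b * X ω + k) ∂P
      = 2 * a * (∫ ω, ξ ω * m ω ∂P - ∫ ω, m ω ^ 2 ∂P)
        + b * (∫ ω, ξ ω * X ω ∂P - ∫ ω, m ω * X ω ∂P) + k * (∫ ω, ξ ω ∂P - ∫ ω, m ω ∂P) := by
    have : (fun ω => (ξ ω - m ω) * (2 * a * m ω + b * X ω + k))
        = fun ω => (2 * a * (ξ ω * m ω - m ω ^ 2) + b * (ξ ω * X ω - m ω * X ω))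
          + k * (ξ ω - m ω) := funext fun ω => by ring
    rw [this, integral_add, integral_add, integral_const_mul, integral_const_mul,
      integral_const_mul, integral_sub iξm im2, integral_sub iξX imX,
      integral_sub iξ im]
    all_goals fun_prop
  rw [hsq, hlin, integral_sub iξ im]
  unfold cost
  ring

section Minimizer

variable [IsProbabilityMeasure P]

lemma integral_minimizer (hX : Integrable X P) :
    ∫ ω, minimizer P X a b c d ω ∂P = -(b * ∫ ω, X ω ∂P + d) / (2 * (a + c)) := by
  unfold minimizer
  rw [integral_sub, integral_const_mul, integral_sub hX (integrable_const _)]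
  · simp
  all_goals fun_prop

lemma memLp_minimizer (hX : MemLp X 2 P) : MemLp (minimizer P X a b c d) 2 P :=
  (memLp_const _).sub ((hX.sub (memLp_const _)).const_mul _)

lemma gradient_cost_minimizer (ha : a ≠ 0) (hac : a + c ≠ 0) (hX : Integrable X P) (ω : Ω) :
    2 * a * minimizer P X a b c d ω + b * X ω
      + (2 * c * ∫ ω', minimizer P X a b c d ω' ∂P + d) = 0 := by
  rw [integral_minimizer hX]
  unfold minimizer
  field_simp
  ring

lemma cost_eq_cost_minimizer_add (ha : a ≠ 0) (hac : a + c ≠ 0) (hX : MemLp X 2 P)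
    {ξ : Ω → ℝ} (hξ : MemLp ξ 2 P) :
    cost P X a b c d ξ = cost P X a b c d (minimizer P X a b c d)
      + a * ∫ ω, (ξ ω - minimizer P X a b c d ω) ^ 2 ∂P
      + c * (∫ ω, (ξ ω - minimizer P X a b c d ω) ∂P) ^ 2 := by
  rw [cost_eq_add (m := minimizer P X a b c d) hX hξ (memLp_minimizer hX)]
  simp only [gradient_cost_minimizer ha hac (hX.integrable one_le_two), mul_zero, integral_zero,
    add_zero]

lemma cost_minimizer_le (ha : 0 < a) (hac : 0 < a + c) (hX : MemLp X 2 P)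
    {ξ : Ω → ℝ} (hξ : MemLp ξ 2 P) :
    cost P X a b c d (minimizer P X a b c d) ≤ cost P X a b c d ξ := by
  rw [cost_eq_cost_minimizer_add ha.ne' hac.ne' hX hξ, add_assoc]
  exact le_add_of_nonneg_right <|
    mul_integral_sq_add_mul_sq_integral_nonneg ha hac (hξ.sub (memLp_minimizer hX))

lemma ae_eq_minimizer_of_cost_eq (ha : 0 < a) (hac : 0 < a + c) (hX : MemLp X 2 P)
    {ξ : Ω → ℝ} (hξ : MemLp ξ 2 P)
    (hcost : cost P X a b c d ξ = cost P X a b c d (minimizer P X a b c d)) :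
    ξ =ᵐ[P] minimizer P X a b c d := by
  rw [cost_eq_cost_minimizer_add ha.ne' hac.ne' hX hξ, add_assoc, add_eq_left] at hcost
  filter_upwards [ae_eq_zero_of_mul_integral_sq_add_mul_sq_integral_eq_zero ha hac
    (hξ.sub (memLp_minimizer hX)) hcost] with ω hω
  exact sub_eq_zero.mp hω

end Minimizer

end MeanFieldQuadratic

open MeanFieldQuadratic in
theorem stmt17_general {Ω : Type*} [MeasurableSpace Ω] (P : Measure Ω) [IsProbabilityMeasure P]
    (Γ : ℝ) (b2 b3 β η : ℝ)
    (hβ : 0 < 1 + Γ * β) (hβη : 0 < 1 + Γ * (β + η))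
    (X : Ω → ℝ) (hX : MemLp X 2 P) :
    let EX : ℝ := ∫ ω, X ω ∂P
    let F : (Ω → ℝ) → ℝ := fun α =>
      (1 + Γ * β) / 2 * (∫ ω, (α ω) ^ 2 ∂P) + Γ * η / 2 * (∫ ω, α ω ∂P) ^ 2 +
        β * b3 * (∫ ω, α ω * X ω ∂P) +
        (β * b2 + η * (b2 + b3)) * (∫ ω, α ω ∂P) * EX
    let αstar : Ω → ℝ := fun ω =>
      -((b2 + b3) * (β + η) / (1 + Γ * (β + η))) * EX -
        (b3 * β / (1 + Γ * β)) * (X ω - EX)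
    (∀ α : Ω → ℝ, MemLp α 2 P → F αstar ≤ F α) ∧
    (∀ α : Ω → ℝ, MemLp α 2 P → F α = F αstar → α =ᵐ[P] αstar) := by
  intro EX F αstar
  have hF : F = cost P X ((1 + Γ * β) / 2) (β * b3) (Γ * η / 2)
      ((β * b2 + η * (b2 + b3)) * EX) := funext fun α => by unfold F cost; ring
  have hαstar : αstar = minimizer P X ((1 + Γ * β) / 2) (β * b3) (Γ * η / 2)
      ((β * b2 + η * (b2 + b3)) * EX) := funext fun ω => by
    unfold αstar minimizer
    field_simp
    ring
  have ha : 0 < (1 + Γ * β) / 2 := by positivity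
  have hac : 0 < (1 + Γ * β) / 2 + Γ * η / 2 := by linarith
  rw [hF, hαstar]
  exact ⟨fun α hα => cost_minimizer_le ha hac hX hα,
    fun α hα => ae_eq_minimizer_of_cost_eq ha hac hX hα⟩

/-- the pointwise minimization in the HJB equation of the linear-quadratic
extended mean-field control problem with Poissonian common noise: the functional
`F(α) = ½(1+Γβ) E[α²] + (Γη/2)(E[α])² + β b₃ E[αX] + (β b₂ + η(b₂+b₃)) E[α] E[X]`
over `L²` has the unique minimizer
`α* = -((b₂+b₃)(β+η)/(1+Γ(β+η))) E[X] - (b₃β/(1+Γβ))(X - E[X])`. -/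
theorem stmt17 {Ω : Type*} [MeasurableSpace Ω] (P : Measure Ω) [IsProbabilityMeasure P]
    (Γ : ℝ) (hΓ : 0 ≤ Γ) (b2 b3 β η : ℝ)
    (hβ : 0 < 1 + Γ * β) (hβη : 0 < 1 + Γ * (β + η))
    (X : Ω → ℝ) (hX : MemLp X 2 P) :
    let EX : ℝ := ∫ ω, X ω ∂P
    let F : (Ω → ℝ) → ℝ := fun α =>
      (1 + Γ * β) / 2 * (∫ ω, (α ω) ^ 2 ∂P) + Γ * η / 2 * (∫ ω, α ω ∂P) ^ 2 +
        β * b3 * (∫ ω, α ω * X ω ∂P) +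
        (β * b2 + η * (b2 + b3)) * (∫ ω, α ω ∂P) * EX
    let αstar : Ω → ℝ := fun ω =>
      -((b2 + b3) * (β + η) / (1 + Γ * (β + η))) * EX -
        (b3 * β / (1 + Γ * β)) * (X ω - EX)
    (∀ α : Ω → ℝ, MemLp α 2 P → F αstar ≤ F α) ∧
    (∀ α : Ω → ℝ, MemLp α 2 P → F α = F αstar → α =ᵐ[P] αstar) :=
  stmt17_general P Γ b2 b3 β η hβ hβη X hX
end
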